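/- arXiv:2203.11812 — 3 statements merged into one kernel-verified Lean document; each statement's English description precedes it below -/
import Mathlib

section
/- SLS achievability (converse direction): let F : ℓ^n × ℓ^m → ℓ^n be strictly causal and let Ψ^x : ℓ^n → ℓ^n, Ψ^u : ℓ^n → ℓ^m be causal operators satisfying Ψ^x = F(Ψ^x, Ψ^u) + I. Assume Ψ^x is invertible with causal inverse. Then the causal controller K = Ψ^u ∘ (Ψ^x)^{-1} induces closed-loop maps Φ^x[F,K] = Ψ^x and Φ^u[F,K] = Ψ^u. -/
/-- Sequences of vectors in ℝ^n. -/
abbrev VSeq (n : ℕ) := ℕ → (Fin n → ℝ)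

/-- Causality: the t-th output depends only on inputs up to time t. -/
def Causal {n m : ℕ} (A : VSeq n → VSeq m) : Prop :=
  ∀ x y : VSeq n, ∀ t : ℕ, (∀ s ≤ t, x s = y s) → A x t = A y t

/-- ℓp-stability: a causal operator mapping ℓ_p sequences to ℓ_p sequences. -/
def LpStable {n m : ℕ} (p : ENNReal) (A : VSeq n → VSeq m) : Prop :=
  Causal A ∧ ∀ x : VSeq n, Memℓp x p → Memℓp (A x) p

/-- Strict causality of a two-argument operator: the t-th output depends only
on inputs strictly before time t, and the 0-th output is zero. -/
def StrictCausal2 {n m k : ℕ} (F : VSeq n → VSeq m → VSeq k) : Prop :=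
  (∀ x u, F x u 0 = 0) ∧
  ∀ x x' : VSeq n, ∀ u u' : VSeq m, ∀ t : ℕ,
    (∀ s < t, x s = x' s) → (∀ s < t, u s = u' s) → F x u t = F x' u' t

/-!
If `(x, u)` is a closed-loop trajectory for the disturbance `w`, put `v := (Ψˣ)⁻¹ x`. Then
`x = Ψˣ v` and `u = Ψᵘ v`, so the achievability identity at `v` and the loop equation at `w`
write the same `x` both as `F(x, u) + v` and as `F(x, u) + w`; cancelling gives `v = w`.
-/

theorem eq_of_apply_eq_feedback_add {n m : ℕ} {F : VSeq n → VSeq m → VSeq n}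
    {Ψx : VSeq n → VSeq n} {Ψu : VSeq n → VSeq m}
    (hach : ∀ w : VSeq n, Ψx w = fun t => F (Ψx w) (Ψu w) t + w t) {v w : VSeq n}
    (h : Ψx v = fun t => F (Ψx v) (Ψu v) t + w t) : v = w :=
  funext fun t => add_left_cancel ((congrFun (hach v) t).symm.trans (congrFun h t))

theorem achievability_converse_general
    {n m : ℕ} (F : VSeq n → VSeq m → VSeq n)
    (Ψx : VSeq n → VSeq n) (Ψu : VSeq n → VSeq m)
    (hach : ∀ w : VSeq n, Ψx w = fun t => F (Ψx w) (Ψu w) t + w t)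
    (Ψxinv : VSeq n → VSeq n)
    (hli : Function.LeftInverse Ψxinv Ψx) (hri : Function.RightInverse Ψxinv Ψx) :
    ∀ w : VSeq n,
      (Ψx w = (fun t => F (Ψx w) (Ψu w) t + w t) ∧
        Ψu w = (Ψu ∘ Ψxinv) (Ψx w)) ∧
      (∀ x : VSeq n, ∀ u : VSeq m,
        x = (fun t => F x u t + w t) → u = (Ψu ∘ Ψxinv) x →
        x = Ψx w ∧ u = Ψu w) := by
  intro w
  refine ⟨⟨hach w, by rw [Function.comp_apply, hli w]⟩, fun x u hx hu => ?_⟩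
  obtain ⟨v, rfl⟩ : ∃ v, Ψx v = x := ⟨Ψxinv x, hri x⟩
  obtain rfl : u = Ψu v := by rw [hu, Function.comp_apply, hli v]
  obtain rfl : v = w := eq_of_apply_eq_feedback_add hach hx
  exact ⟨rfl, rfl⟩

/-- SLS achievability, converse: if causal (Ψ^x, Ψ^u) satisfy
Ψ^x = F(Ψ^x,Ψ^u) + I and Ψ^x has a causal inverse Ψxinv, then the causal
controller K = Ψ^u ∘ (Ψ^x)⁻¹ induces the closed-loop maps (Ψ^x, Ψ^u): for every
w, the pair (Ψ^x(w), Ψ^u(w)) is the (unique) closed-loop trajectory, and any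
closed-loop trajectory of K coincides with it. -/
theorem achievability_converse
    {n m : ℕ} (F : VSeq n → VSeq m → VSeq n)
    (Ψx : VSeq n → VSeq n) (Ψu : VSeq n → VSeq m)
    (hF : StrictCausal2 F) (hΨx : Causal Ψx) (hΨu : Causal Ψu)
    (hach : ∀ w : VSeq n, Ψx w = fun t => F (Ψx w) (Ψu w) t + w t)
    (Ψxinv : VSeq n → VSeq n) (hinv : Causal Ψxinv)
    (hli : Function.LeftInverse Ψxinv Ψx) (hri : Function.RightInverse Ψxinv Ψx) :
    ∀ w : VSeq n,
      (Ψx w = (fun t => F (Ψx w) (Ψu w) t + w t) ∧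
        Ψu w = (Ψu ∘ Ψxinv) (Ψx w)) ∧
      (∀ x : VSeq n, ∀ u : VSeq m,
        x = (fun t => F x u t + w t) → u = (Ψu ∘ Ψxinv) x →
        x = Ψx w ∧ u = Ψu w) :=
  achievability_converse_general F Ψx Ψu hach Ψxinv hli hri
end

section
/- Completeness of the parametrization (Theorem 2, part 2): let F be strictly causal and K' be strongly ℓp-IS stabilizing (i.e., ℓp-IS stabilizing and K' itself maps ℓ_p^n into ℓ_p^m). Then for any achievable and stable closed-loop pair (Ψ^x, Ψ^u) ∈ CL_p[F], the operator M = −K'(Ψ^x) + Ψ^u lies in L_p, and the controller u = K'(x) + M(w) with w = x − F(x,u) achieves exactly the closed-loop maps (Ψ^x, Ψ^u). -/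
/-- Membership in CL_p[F]: (Ψ^x,Ψ^u) are the closed-loop maps of some causal
controller K for F, and they are ℓp-stable. -/
def InCLp {n m : ℕ} (p : ENNReal) (F : VSeq n → VSeq m → VSeq n)
    (Ψx : VSeq n → VSeq n) (Ψu : VSeq n → VSeq m) : Prop :=
  (∃ K : VSeq n → VSeq m, Causal K ∧ ∀ w : VSeq n,
      Ψx w = (fun t => F (Ψx w) (Ψu w) t + w t) ∧ Ψu w = K (Ψx w)) ∧
  (∀ w : VSeq n, Memℓp w p → Memℓp (Ψx w) p ∧ Memℓp (Ψu w) p)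

theorem Causal.comp {n m k : ℕ} {A : VSeq n → VSeq m} {B : VSeq m → VSeq k}
    (hA : Causal A) (hB : Causal B) : Causal (B ∘ A) :=
  fun x y t hxy => hB (A x) (A y) t fun s hs => hA x y s fun r hr => hxy r (hr.trans hs)

theorem Causal.neg_add {n m : ℕ} {A B : VSeq n → VSeq m} (hA : Causal A) (hB : Causal B) :
    Causal (fun x t => -A x t + B x t) := by
  intro x y t hxy
  simp only [hA x y t hxy, hB x y t hxy]

theorem StrictCausal2.loop_eq_of_eqOn_Iic {n m : ℕ} {F : VSeq n → VSeq m → VSeq n}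
    {K : VSeq n → VSeq m} (hF : StrictCausal2 F) (hK : Causal K)
    {w w' x x' : VSeq n} {v v' u u' : VSeq m}
    (hx : x = fun t => F x u t + w t) (hu : u = fun t => K x t + v t)
    (hx' : x' = fun t => F x' u' t + w' t) (hu' : u' = fun t => K x' t + v' t)
    (t : ℕ) (hw : ∀ s ≤ t, w s = w' s) (hv : ∀ s ≤ t, v s = v' s) :
    x t = x' t ∧ u t = u' t := by
  induction t using Nat.strong_induction_on with
  | _ t ih =>
    have hpast : ∀ s < t, x s = x' s ∧ u s = u' s := fun s hs =>
      ih s hs (fun r hr => hw r (hr.trans hs.le)) (fun r hr => hv r (hr.trans hs.le))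
    have hxt : x t = x' t := by
      rw [congrFun hx t, congrFun hx' t, hw t le_rfl,
        hF.2 x x' u u' t (fun s hs => (hpast s hs).1) (fun s hs => (hpast s hs).2)]
    refine ⟨hxt, ?_⟩
    have hKt : K x t = K x' t := hK x x' t fun s hs => by
      rcases hs.lt_or_eq with hs | rfl
      · exact (hpast s hs).1
      · exact hxt
    rw [congrFun hu t, congrFun hu' t, hKt, hv t le_rfl]

theorem StrictCausal2.loop_eq {n m : ℕ} {F : VSeq n → VSeq m → VSeq n}
    {K : VSeq n → VSeq m} (hF : StrictCausal2 F) (hK : Causal K)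
    {w x x' : VSeq n} {v u u' : VSeq m}
    (hx : x = fun t => F x u t + w t) (hu : u = fun t => K x t + v t)
    (hx' : x' = fun t => F x' u' t + w t) (hu' : u' = fun t => K x' t + v t) :
    x = x' ∧ u = u' :=
  ⟨funext fun t => (hF.loop_eq_of_eqOn_Iic hK hx hu hx' hu' t (fun _ _ => rfl)
      (fun _ _ => rfl)).1,
    funext fun t => (hF.loop_eq_of_eqOn_Iic hK hx hu hx' hu' t (fun _ _ => rfl)
      (fun _ _ => rfl)).2⟩

theorem StrictCausal2.causal_closedLoop {n m : ℕ} {F : VSeq n → VSeq m → VSeq n}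
    {K : VSeq n → VSeq m} (hF : StrictCausal2 F) (hK : Causal K)
    {Ψx : VSeq n → VSeq n} {Ψu : VSeq n → VSeq m}
    (hloop : ∀ w, Ψx w = (fun t => F (Ψx w) (Ψu w) t + w t) ∧ Ψu w = K (Ψx w)) :
    Causal Ψx ∧ Causal Ψu := by
  have hloop' : ∀ w, Ψu w = fun t => K (Ψx w) t + (0 : VSeq m) t := fun w => by
    simpa using (hloop w).2
  have h := fun w w' t hw => hF.loop_eq_of_eqOn_Iic hK (hloop w).1 (hloop' w) (hloop w').1
    (hloop' w') t hw (fun _ _ => rfl)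
  exact ⟨fun w w' t hw => (h w w' t hw).1, fun w w' t hw => (h w w' t hw).2⟩

theorem sub_eq_of_loop {n m : ℕ} {F : VSeq n → VSeq m → VSeq n} {w x : VSeq n} {u : VSeq m}
    (hx : x = fun t => F x u t + w t) : (fun s => x s - F x u s) = w := by
  funext s
  rw [congrFun hx s, add_sub_cancel_left]

theorem parametrization_completeness_general
    {n m : ℕ} (p : ENNReal) (F : VSeq n → VSeq m → VSeq n)
    (K' : VSeq n → VSeq m)
    (hF : StrictCausal2 F) (hK' : Causal K')
    (hK'lp : ∀ x : VSeq n, Memℓp x p → Memℓp (K' x) p)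
    (Ψx : VSeq n → VSeq n) (Ψu : VSeq n → VSeq m)
    (hΨ : InCLp p F Ψx Ψu) :
    LpStable p (fun w => fun t => -K' (Ψx w) t + Ψu w t) ∧
    (∀ w : VSeq n,
      Ψx w = (fun t => F (Ψx w) (Ψu w) t + w t) ∧
      Ψu w = (fun t => K' (Ψx w) t +
        (fun w' => fun t' => -K' (Ψx w') t' + Ψu w' t')
          (fun s => Ψx w s - F (Ψx w) (Ψu w) s) t) ∧
      (∀ (x : VSeq n) (u : VSeq m),
        x = (fun t => F x u t + w t) →
        u = (fun t => K' x t +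
          (fun w' => fun t' => -K' (Ψx w') t' + Ψu w' t')
            (fun s => x s - F x u s) t) →
        x = Ψx w ∧ u = Ψu w)) := by
  obtain ⟨⟨K, hK, hloop⟩, hstab⟩ := hΨ
  obtain ⟨hΨxc, hΨuc⟩ := hF.causal_closedLoop hK hloop
  refine ⟨⟨(hΨxc.comp hK').neg_add hΨuc, fun w hw =>
    (hK'lp (Ψx w) (hstab w hw).1).neg.add (hstab w hw).2⟩, fun w => ?_⟩
  have hΨu : Ψu w = fun t => K' (Ψx w) t + (-K' (Ψx w) t + Ψu w t) := by
    funext t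
    exact (add_neg_cancel_left _ _).symm
  refine ⟨(hloop w).1, by rwa [sub_eq_of_loop (hloop w).1], fun x u hx hu => ?_⟩
  rw [sub_eq_of_loop hx] at hu
  exact hF.loop_eq hK' hx hu (hloop w).1 hΨu

/-- Theorem 2, part 2: if K' is strongly ℓp-IS stabilizing, then
for any (Ψ^x,Ψ^u) ∈ CL_p[F], the operator M = −K'(Ψ^x) + Ψ^u lies in L_p, and
the controller u = K'(x) + M(w), with w = x − F(x,u), achieves exactly the
closed-loop maps (Ψ^x,Ψ^u). -/
theorem parametrization_completeness
    {n m : ℕ} (p : ENNReal) (F : VSeq n → VSeq m → VSeq n)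
    (K' : VSeq n → VSeq m)
    (hF : StrictCausal2 F) (hK' : Causal K')
    (hIS : ∀ (w : VSeq n) (v : VSeq m) (x : VSeq n) (u : VSeq m),
      x = (fun t => F x u t + w t) → u = (fun t => K' x t + v t) →
      Memℓp w p → Memℓp v p → Memℓp x p ∧ Memℓp u p)
    (hK'lp : ∀ x : VSeq n, Memℓp x p → Memℓp (K' x) p)
    (Ψx : VSeq n → VSeq n) (Ψu : VSeq n → VSeq m)
    (hΨ : InCLp p F Ψx Ψu) :
    LpStable p (fun w => fun t => -K' (Ψx w) t + Ψu w t) ∧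
    (∀ w : VSeq n,
      Ψx w = (fun t => F (Ψx w) (Ψu w) t + w t) ∧
      Ψu w = (fun t => K' (Ψx w) t +
        (fun w' => fun t' => -K' (Ψx w') t' + Ψu w' t')
          (fun s => Ψx w s - F (Ψx w) (Ψu w) s) t) ∧
      (∀ (x : VSeq n) (u : VSeq m),
        x = (fun t => F x u t + w t) →
        u = (fun t => K' x t +
          (fun w' => fun t' => -K' (Ψx w') t' + Ψu w' t')
            (fun s => x s - F x u s) t) →
        x = Ψx w ∧ u = Ψu w)) :=
  parametrization_completeness_general p F K' hF hK' hK'lp Ψx Ψu hΨ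
end

section
/- Inductive step of the completeness proof: let F be strictly causal and let (Ψ^x, Ψ^u) satisfy the achievability equation Ψ^x = F(Ψ^x, Ψ^u) + I. Let (Φ^x, Φ^u) be the closed-loop maps of the controller u = K'(x) + M(w), where M = −K'(Ψ^x) + Ψ^u and w = x − F(x,u). If Φ^x_i = Ψ^x_i and Φ^u_i = Ψ^u_i for all i ≤ j, then Φ^x_{j+1} = Ψ^x_{j+1} and Φ^u_{j+1} = Ψ^u_{j+1}. -/
/-!
Strict causality of `F` makes the state at time `j + 1` a function of the common past, so the
two state trajectories agree there. The closed loop reconstructs the disturbance exactly,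
`x - F(x, u) = w`, so `M` sees `w` itself and its term `-K'(Ψˣ w)` cancels `K'(Φˣ w)` at time
`j + 1` by causality of `K'`, leaving `Ψᵘ w`.
-/

theorem StrictCausal2.apply_succ_eq {n m k : ℕ} {F : VSeq n → VSeq m → VSeq k}
    (hF : StrictCausal2 F) {x x' : VSeq n} {u u' : VSeq m} {j : ℕ}
    (h : ∀ i ≤ j, x i = x' i ∧ u i = u' i) :
    F x u (j + 1) = F x' u' (j + 1) :=
  hF.2 x x' u u' (j + 1) (fun i hi => (h i (Nat.lt_succ_iff.mp hi)).1)
    (fun i hi => (h i (Nat.lt_succ_iff.mp hi)).2)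

theorem Causal.apply_succ_eq {n m : ℕ} {A : VSeq n → VSeq m} (hA : Causal A)
    {x y : VSeq n} {j : ℕ} (h : ∀ i ≤ j, x i = y i) (hsucc : x (j + 1) = y (j + 1)) :
    A x (j + 1) = A y (j + 1) :=
  hA x y (j + 1) fun i hi => (Nat.le_succ_iff.mp hi).elim (h i) fun hij => hij ▸ hsucc

theorem completeness_inductive_step_general
    {n m : ℕ} (F : VSeq n → VSeq m → VSeq n) (K' : VSeq n → VSeq m)
    (hF : StrictCausal2 F) (hK' : Causal K')
    (Ψx : VSeq n → VSeq n) (Ψu : VSeq n → VSeq m)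
    (hach : ∀ w : VSeq n, Ψx w = fun t => F (Ψx w) (Ψu w) t + w t)
    (M : VSeq n → VSeq m)
    (hM : M = fun w => fun t => -K' (Ψx w) t + Ψu w t)
    (Φx : VSeq n → VSeq n) (Φu : VSeq n → VSeq m)
    (hCL : ∀ w : VSeq n,
      Φx w = (fun t => F (Φx w) (Φu w) t + w t) ∧
      Φu w = (fun t => K' (Φx w) t +
        M (fun s => Φx w s - F (Φx w) (Φu w) s) t))
    (w : VSeq n) (j : ℕ)
    (hind : ∀ i ≤ j, Φx w i = Ψx w i ∧ Φu w i = Ψu w i) :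
    Φx w (j + 1) = Ψx w (j + 1) ∧ Φu w (j + 1) = Ψu w (j + 1) := by
  obtain ⟨hΦx, hΦu⟩ := hCL w
  have hw : (fun s => Φx w s - F (Φx w) (Φu w) s) = w :=
    funext fun s => sub_eq_of_eq_add' (congrFun hΦx s)
  have hx : Φx w (j + 1) = Ψx w (j + 1) := by
    rw [hΦx, hach w]
    exact congrArg (· + w (j + 1)) (hF.apply_succ_eq hind)
  have hK : K' (Φx w) (j + 1) = K' (Ψx w) (j + 1) :=
    hK'.apply_succ_eq (fun i hi => (hind i hi).1) hx
  refine ⟨hx, ?_⟩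
  rw [hΦu, hw, hM]
  simp only [hK, add_neg_cancel_left]

/-- inductive step of the completeness proof: with
M = −K'(Ψ^x) + Ψ^u and (Φ^x,Φ^u) the closed-loop maps of the controller
u = K'(x) + M(w), w = x − F(x,u), if the closed-loop maps agree with (Ψ^x,Ψ^u)
componentwise up to time j, then they also agree at time j+1. -/
theorem completeness_inductive_step
    {n m : ℕ} (F : VSeq n → VSeq m → VSeq n) (K' : VSeq n → VSeq m)
    (hF : StrictCausal2 F) (hK' : Causal K')
    (Ψx : VSeq n → VSeq n) (Ψu : VSeq n → VSeq m)
    (hΨx : Causal Ψx) (hΨu : Causal Ψu)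
    (hach : ∀ w : VSeq n, Ψx w = fun t => F (Ψx w) (Ψu w) t + w t)
    (M : VSeq n → VSeq m)
    (hM : M = fun w => fun t => -K' (Ψx w) t + Ψu w t)
    (Φx : VSeq n → VSeq n) (Φu : VSeq n → VSeq m)
    (hCL : ∀ w : VSeq n,
      Φx w = (fun t => F (Φx w) (Φu w) t + w t) ∧
      Φu w = (fun t => K' (Φx w) t +
        M (fun s => Φx w s - F (Φx w) (Φu w) s) t))
    (w : VSeq n) (j : ℕ)
    (hind : ∀ i ≤ j, Φx w i = Ψx w i ∧ Φu w i = Ψu w i) :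
    Φx w (j + 1) = Ψx w (j + 1) ∧ Φu w (j + 1) = Ψu w (j + 1) :=
  completeness_inductive_step_general F K' hF hK' Ψx Ψu hach M hM Φx Φu hCL w j hind
end
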